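/- In ℝ³, let K(dx) := C₁·min{1, |x|⁻¹} dx, L(dx) := C₂·e^{−c|x|}·|x|⁻² dx, and M(dx) := C₃·e^{−c|x|} dx with constants C₁, C₂, C₃ < ∞, c > 0. Then there exists C < ∞ such that for all r ∈ (0,1): Σ_{z ∈ ℤ³} K(B(zr, 3r))·M(B(zr, 2r)) ≤ C·r³ and Σ_{z ∈ ℤ³} M(B(zr, 3r))·L(B(zr, 2r)) ≤ C·r³. -/

import Mathlib

/-! Both K and M have density at most their constant, so K(B(zr, 3r)) and M(B(zr, 3r)) are
O(r³) uniformly in z. The balls B(zr, 2r) cover each point at most 5³ times, so the remaining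
sum is at most 125 times the total mass of M, resp. L, which is finite since c > 0 and |x|⁻²
is integrable near 0 in ℝ³. -/

open MeasureTheory ProbabilityTheory InnerProductGeometry Real Set
open scoped ENNReal NNReal

noncomputable section

abbrev E3 : Type := EuclideanSpace ℝ (Fin 3)
abbrev S2 : Type := Metric.sphere (0 : E3) 1

/-- Uniform (normalized) probability measure on the unit sphere `S²`. -/
noncomputable def uniformS2 : Measure S2 :=
  ((volume : Measure E3).toSphere Set.univ)⁻¹ • (volume : Measure E3).toSphere

/-- Uniform measure on `S²`, viewed as a measure on `ℝ³` (supported on the sphere). -/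
noncomputable def uniformS2amb : Measure E3 := uniformS2.map Subtype.val

/-- Cross product on `ℝ³`. -/
noncomputable def cross3 (u v : E3) : E3 :=
  (WithLp.equiv 2 (Fin 3 → ℝ)).symm
    (crossProduct ((WithLp.equiv 2 (Fin 3 → ℝ)) u) ((WithLp.equiv 2 (Fin 3 → ℝ)) v))

/-- The measure `K(dx) = C₁·min{1,|x|⁻¹} dx` on `ℝ³`. -/
noncomputable def measK (C₁ : ℝ) : Measure E3 :=
  volume.withDensity fun x => ENNReal.ofReal (C₁ * min 1 ‖x‖⁻¹)

/-- The measure `L(dx) = C₂·e^{−c|x|}|x|⁻² dx` on `ℝ³`. -/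
noncomputable def measL (C₂ c : ℝ) : Measure E3 :=
  volume.withDensity fun x => ENNReal.ofReal (C₂ * Real.exp (-c * ‖x‖) * (‖x‖ ^ 2)⁻¹)

/-- The measure `M(dx) = C₃·e^{−c|x|} dx` on `ℝ³`. -/
noncomputable def measM (C₃ c : ℝ) : Measure E3 :=
  volume.withDensity fun x => ENNReal.ofReal (C₃ * Real.exp (-c * ‖x‖))

/-- The scaled lattice point `z·r ∈ ℝ³` for `z ∈ ℤ³`. -/
noncomputable def latPt (r : ℝ) (z : Fin 3 → ℤ) : E3 :=
  (WithLp.equiv 2 (Fin 3 → ℝ)).symm fun i => (z i : ℝ) * r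

open Metric Finset

theorem tsum_measure_le_of_bounded_overlap {ι α : Type*} [Countable ι] [MeasurableSpace α]
    (μ : Measure α) {s : ι → Set α} (hs : ∀ i, MeasurableSet (s i)) (T : α → Finset ι)
    (hT : ∀ x i, x ∈ s i → i ∈ T x) {N : ℕ} (hN : ∀ x, #(T x) ≤ N) :
    ∑' i, μ (s i) ≤ N * μ univ := by
  have hmult : ∀ x, ∑' i, (s i).indicator 1 x ≤ (N : ℝ≥0∞) := fun x => calc
    ∑' i, (s i).indicator 1 x = ∑ i ∈ T x, (s i).indicator (1 : α → ℝ≥0∞) x :=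
      tsum_eq_sum fun i hi => indicator_of_notMem (mt (hT x i) hi) _
    _ ≤ ∑ _i ∈ T x, 1 := sum_le_sum fun i _ => indicator_le_self' (fun _ _ => zero_le_one) x
    _ ≤ N := by simpa using hN x
  calc ∑' i, μ (s i) = ∑' i, ∫⁻ x, (s i).indicator 1 x ∂μ := by
        simp_rw [lintegral_indicator_one (hs _)]
    _ = ∫⁻ x, ∑' i, (s i).indicator 1 x ∂μ :=
        (lintegral_tsum fun i => (measurable_const.indicator (hs i)).aemeasurable).symm
    _ ≤ ∫⁻ _, (N : ℝ≥0∞) ∂μ := lintegral_mono hmult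
    _ = N * μ univ := lintegral_const _

theorem mem_piFinset_floor_of_mem_closedBall_latPt {r : ℝ} (hr : 0 < r) (k : ℕ) {x : E3}
    {z : Fin 3 → ℤ} (hx : x ∈ closedBall (latPt r z) (k * r)) :
    z ∈ Fintype.piFinset fun i => Icc (⌊x i / r⌋ - k) (⌊x i / r⌋ + k) := by
  rw [Fintype.mem_piFinset]
  intro i
  have hdist : |x i - z i * r| ≤ k * r := by
    simpa [latPt, Real.dist_eq] using (PiLp.dist_apply_le x (latPt r z) i).trans hx
  rw [abs_le] at hdist
  have hlo : (z i - k : ℤ) ≤ x i / r := by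
    push_cast; rw [le_div_iff₀ hr]; linarith
  have hhi : x i / r ≤ (z i + k : ℤ) := by
    push_cast; rw [div_le_iff₀ hr]; linarith
  have hfloor_lo := Int.le_floor.mpr hlo
  have hfloor_hi := Int.floor_le_floor hhi
  rw [Int.floor_intCast] at hfloor_hi
  rw [Finset.mem_Icc]; omega

theorem tsum_measure_closedBall_latPt_le (μ : Measure E3) {r : ℝ} (hr : 0 < r) (k : ℕ) :
    ∑' z : Fin 3 → ℤ, μ (closedBall (latPt r z) (k * r)) ≤ (2 * k + 1) ^ 3 * μ univ := by
  have := tsum_measure_le_of_bounded_overlap μ (fun _ => measurableSet_closedBall) _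
    (fun x z hx => mem_piFinset_floor_of_mem_closedBall_latPt hr k hx)
    (N := (2 * k + 1) ^ 3) fun x => by
      have hcard (a : ℤ) : #(Icc (a - k) (a + k)) = 2 * k + 1 := by rw [Int.card_Icc]; omega
      simp [Fintype.card_piFinset, hcard]
  exact_mod_cast this

theorem withDensity_ofReal_mul_le_smul {α : Type*} [MeasurableSpace α] (μ : Measure α) (C : ℝ)
    {g : α → ℝ} (hg₀ : ∀ x, 0 ≤ g x) (hg₁ : ∀ x, g x ≤ 1) :
    μ.withDensity (fun x => ENNReal.ofReal (C * g x)) ≤ ENNReal.ofReal C • μ := by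
  rw [← withDensity_const]
  refine withDensity_mono (Filter.Eventually.of_forall fun x => ?_)
  dsimp only
  rw [ENNReal.ofReal_mul' (hg₀ x)]
  exact mul_le_of_le_one_right' (ENNReal.ofReal_le_one.mpr (hg₁ x))

theorem measK_le_smul_volume (C₁ : ℝ) : measK C₁ ≤ ENNReal.ofReal C₁ • volume :=
  withDensity_ofReal_mul_le_smul _ _ (fun _ => by positivity) fun _ => min_le_left _ _

theorem measM_le_smul_volume (C₃ : ℝ) {c : ℝ} (hc : 0 ≤ c) :
    measM C₃ c ≤ ENNReal.ofReal C₃ • volume :=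
  withDensity_ofReal_mul_le_smul _ _ (fun _ => by positivity) fun x =>
    Real.exp_le_one_iff.mpr (by nlinarith [norm_nonneg x])

/-- In polar coordinates `dx = ρ² dρ dσ`, so only the radial weight `ρ² g ρ` must be integrable. -/
theorem isFiniteMeasure_withDensity_radial {g : ℝ → ℝ}
    (hg : IntegrableOn (fun ρ => ρ ^ 2 * g ρ) (Ioi 0)) :
    IsFiniteMeasure ((volume : Measure E3).withDensity fun x => ENNReal.ofReal (g ‖x‖)) := by
  refine isFiniteMeasure_withDensity_ofReal (Integrable.hasFiniteIntegral ?_)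
  rw [integrable_fun_norm_addHaar]
  simpa using hg

theorem isFiniteMeasure_measM (C₃ : ℝ) {c : ℝ} (hc : 0 < c) : IsFiniteMeasure (measM C₃ c) := by
  refine isFiniteMeasure_withDensity_radial (g := fun ρ => C₃ * Real.exp (-c * ρ)) ?_
  have : IntegrableOn (fun ρ : ℝ => C₃ * (ρ ^ (2 : ℝ) * Real.exp (-c * ρ ^ (1 : ℝ)))) (Ioi 0) :=
    (integrableOn_rpow_mul_exp_neg_mul_rpow (by norm_num) one_pos hc).const_mul C₃
  refine this.congr_fun (fun ρ _ => ?_) measurableSet_Ioi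
  simp only [Real.rpow_one, Real.rpow_two]; ring

theorem isFiniteMeasure_measL (C₂ : ℝ) {c : ℝ} (hc : 0 < c) : IsFiniteMeasure (measL C₂ c) := by
  refine isFiniteMeasure_withDensity_radial
    (g := fun ρ => C₂ * Real.exp (-c * ρ) * (ρ ^ 2)⁻¹) ?_
  have : IntegrableOn (fun ρ : ℝ => C₂ * Real.exp (-c * ρ)) (Ioi 0) :=
    (exp_neg_integrableOn_Ioi 0 hc).const_mul C₂
  refine this.congr_fun (fun ρ hρ => ?_) measurableSet_Ioi
  have : ρ ≠ 0 := (mem_Ioi.mp hρ).ne'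
  field_simp

theorem tsum_closedBall_latPt_mul_le {μ ν : Measure E3} {a : ℝ≥0∞} (hμ : μ ≤ a • volume)
    {r : ℝ} (hr : 0 < r) :
    ∑' z : Fin 3 → ℤ, μ (closedBall (latPt r z) (3 * r)) * ν (closedBall (latPt r z) (2 * r)) ≤
      a * volume (closedBall (0 : E3) 3) * 125 * ν univ * ENNReal.ofReal (r ^ 3) := by
  have hball (x : E3) : μ (closedBall x (3 * r)) ≤
      a * volume (closedBall (0 : E3) 3) * ENNReal.ofReal (r ^ 3) := by
    calc μ (closedBall x (3 * r)) ≤ a * volume (closedBall x (r * 3)) := by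
          rw [mul_comm r]; exact hμ _
      _ = _ := by
          rw [Measure.addHaar_closedBall_mul _ _ hr.le zero_le_three, finrank_euclideanSpace_fin]
          ring
  calc _ ≤ ∑' z : Fin 3 → ℤ, a * volume (closedBall (0 : E3) 3) * ENNReal.ofReal (r ^ 3) *
          ν (closedBall (latPt r z) (2 * r)) :=
        ENNReal.tsum_le_tsum fun z => mul_le_mul_left (hball _) _
    _ = a * volume (closedBall (0 : E3) 3) * ENNReal.ofReal (r ^ 3) *
          ∑' z : Fin 3 → ℤ, ν (closedBall (latPt r z) ((2 : ℕ) * r)) := by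
        rw [ENNReal.tsum_mul_left]; norm_num
    _ ≤ a * volume (closedBall (0 : E3) 3) * ENNReal.ofReal (r ^ 3) * (125 * ν univ) := by
        gcongr
        exact (tsum_measure_closedBall_latPt_le ν hr 2).trans_eq (by norm_num)
    _ = _ := by ring

theorem stmt_9_general (C₁ C₂ C₃ c : ℝ) (hc : 0 < c) :
    ∃ C : ℝ, ∀ r ∈ Set.Ioo (0:ℝ) 1,
      (∑' z : Fin 3 → ℤ,
          measK C₁ (Metric.closedBall (latPt r z) (3*r)) *
            measM C₃ c (Metric.closedBall (latPt r z) (2*r)))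
        ≤ ENNReal.ofReal (C * r ^ 3) ∧
      (∑' z : Fin 3 → ℤ,
          measM C₃ c (Metric.closedBall (latPt r z) (3*r)) *
            measL C₂ c (Metric.closedBall (latPt r z) (2*r)))
        ≤ ENNReal.ofReal (C * r ^ 3) := by
  have := isFiniteMeasure_measM C₃ hc
  have := isFiniteMeasure_measL C₂ hc
  set v := volume (closedBall (0 : E3) 3)
  set A := ENNReal.ofReal C₁ * v * 125 * measM C₃ c univ
  set B := ENNReal.ofReal C₃ * v * 125 * measL C₂ c univ
  have hAB : A + B ≠ ∞ := by
    have : v ≠ ∞ := measure_closedBall_lt_top.ne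
    finiteness
  refine ⟨(A + B).toReal, fun r ⟨hr, _⟩ => ?_⟩
  rw [ENNReal.ofReal_mul ENNReal.toReal_nonneg, ENNReal.ofReal_toReal hAB]
  exact ⟨(tsum_closedBall_latPt_mul_le (measK_le_smul_volume C₁) hr).trans
      (by gcongr; exact le_self_add),
    (tsum_closedBall_latPt_mul_le (measM_le_smul_volume C₃ hc.le) hr).trans
      (by gcongr; exact le_add_self)⟩

/-- `Σ_z K(B(zr,3r))·M(B(zr,2r)) ≤ C·r³` and `Σ_z M(B(zr,3r))·L(B(zr,2r)) ≤ C·r³`. -/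
theorem stmt_9 (C₁ C₂ C₃ c : ℝ) (hC₁ : 0 ≤ C₁) (hC₂ : 0 ≤ C₂) (hC₃ : 0 ≤ C₃) (hc : 0 < c) :
    ∃ C : ℝ, ∀ r ∈ Set.Ioo (0:ℝ) 1,
      (∑' z : Fin 3 → ℤ,
          measK C₁ (Metric.closedBall (latPt r z) (3*r)) *
            measM C₃ c (Metric.closedBall (latPt r z) (2*r)))
        ≤ ENNReal.ofReal (C * r ^ 3) ∧
      (∑' z : Fin 3 → ℤ,
          measM C₃ c (Metric.closedBall (latPt r z) (3*r)) *
            measL C₂ c (Metric.closedBall (latPt r z) (2*r)))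
        ≤ ENNReal.ofReal (C * r ^ 3) :=
  stmt_9_general C₁ C₂ C₃ c hc
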